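/- arXiv:1004.1127 — 3 statements merged into one kernel-verified Lean document; each statement's English description precedes it below -/
import Mathlib

section
/- For all integers q ≥ 2, all y ∈ (0, 1 - 1/q), and all ε ∈ (0, y): H_q^{-1}(y - ε) ≤ H_q^{-1}(y) - ε / log_q[(q-1)·(2/H_q^{-1}(y-ε) - 1)]. -/
/-!
Put `a = H⁻¹(y - ε)` and `b = H⁻¹(y)`, so that `a < b` and `H b - H a = ε`. Since `H` is
concave, its graph lies below the tangent at `a`, whose slope is `log_q[(q-1)(1/a - 1)]`; hence
`ε ≤ log_q[(q-1)(1/a - 1)] · (b - a) ≤ log_q[(q-1)(2/a - 1)] · (b - a)`,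
which rearranges to the claim.
-/

/-- The `q`-ary entropy function. -/
noncomputable def qaryEntropy (q x : ℝ) : ℝ :=
  x * Real.logb q (q - 1) - x * Real.logb q x - (1 - x) * Real.logb q (1 - x)

lemma qaryEntropy_natCast (q : ℕ) :
    qaryEntropy q = (Real.log q)⁻¹ • Real.qaryEntropy q := by
  ext x
  simp only [qaryEntropy, Real.qaryEntropy, Real.binEntropy, Real.logb, Real.log_inv,
    Pi.smul_apply, smul_eq_mul]
  push_cast
  ring

lemma concaveOn_qaryEntropy (q : ℕ) : ConcaveOn ℝ (Set.Icc 0 1) (qaryEntropy q) := by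
  rw [qaryEntropy_natCast]
  exact Real.strictConcaveOn_qaryEntropy.concaveOn.smul (inv_nonneg.2 (Real.log_natCast_nonneg q))

lemma strictMonoOn_qaryEntropy {q : ℕ} (hq : 2 ≤ q) :
    StrictMonoOn (qaryEntropy q) (Set.Icc 0 (1 - 1 / q)) := by
  have hlog : 0 < Real.log q := Real.log_pos (by exact_mod_cast hq)
  intro a ha b hb hab
  rw [qaryEntropy_natCast]
  exact mul_lt_mul_of_pos_left (Real.qaryEntropy_strictMonoOn hq ha hb hab) (inv_pos.2 hlog)

lemma hasDerivAt_qaryEntropy {q : ℕ} (hq : q ≠ 1) {x : ℝ} (hx₀ : 0 < x) (hx₁ : x < 1) :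
    HasDerivAt (qaryEntropy q) (Real.logb q ((q - 1) * (1 / x - 1))) x := by
  have hq' : (q : ℝ) - 1 ≠ 0 := sub_ne_zero.2 (by exact_mod_cast hq)
  have hx : 1 / x - 1 = (1 - x) / x := by field_simp
  rw [qaryEntropy_natCast, hx, Real.logb, Real.log_mul hq' (by positivity),
    Real.log_div (by linarith) hx₀.ne', div_eq_inv_mul]
  exact ((Real.hasDerivAt_qaryEntropy hx₀.ne' hx₁.ne).const_mul _).congr_deriv (by ring)

lemma qaryEntropy_sub_le {q : ℕ} (hq : q ≠ 1) {a b : ℝ} (ha₀ : 0 < a) (hab : a < b)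
    (hb₁ : b ≤ 1) :
    qaryEntropy q b - qaryEntropy q a ≤ Real.logb q ((q - 1) * (1 / a - 1)) * (b - a) := by
  have hslope := (concaveOn_qaryEntropy q).slope_le_of_hasDerivAt ⟨ha₀.le, by linarith⟩
    ⟨by linarith, hb₁⟩ hab (hasDerivAt_qaryEntropy hq ha₀ (by linarith))
  rwa [slope_def_field, div_le_iff₀ (sub_pos.2 hab)] at hslope

theorem qaryEntropy_inv_bound_general (q : ℕ) (hq : 2 ≤ q) (Hinv : ℝ → ℝ)
    (hmaps : ∀ t ∈ Set.Ioo (0 : ℝ) 1, Hinv t ∈ Set.Ioo 0 (1 - 1 / (q : ℝ)))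
    (hright : ∀ t ∈ Set.Ioo (0 : ℝ) 1, qaryEntropy q (Hinv t) = t)
    (y ε : ℝ) (hy : y ∈ Set.Ioo (0 : ℝ) (1 - 1 / (q : ℝ))) (hε : ε ∈ Set.Ioo (0 : ℝ) y) :
    Hinv (y - ε) ≤ Hinv y - ε / Real.logb q (((q : ℝ) - 1) * (2 / Hinv (y - ε) - 1)) := by
  obtain ⟨hy₀, hy₁⟩ := hy
  obtain ⟨hε₀, hεy⟩ := hε
  have hq' : (2 : ℝ) ≤ q := by exact_mod_cast hq
  have hq_inv : 0 < 1 / (q : ℝ) := by positivity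
  have hyε_mem : y - ε ∈ Set.Ioo (0 : ℝ) 1 := ⟨by linarith, by linarith⟩
  have hy_mem : y ∈ Set.Ioo (0 : ℝ) 1 := ⟨hy₀, by linarith⟩
  obtain ⟨ha₀, ha₁⟩ := hmaps _ hyε_mem
  obtain ⟨hb₀, hb₁⟩ := hmaps _ hy_mem
  set a := Hinv (y - ε)
  set b := Hinv y
  have hε_eq : ε = qaryEntropy q b - qaryEntropy q a := by
    rw [hright _ hyε_mem, hright _ hy_mem]; ring
  have hab : a < b :=
    (strictMonoOn_qaryEntropy hq).lt_iff_lt ⟨ha₀.le, ha₁.le⟩ ⟨hb₀.le, hb₁.le⟩ |>.1 (by linarith)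
  have h_inv_a : 1 < 1 / a := by rw [lt_div_iff₀ ha₀]; linarith
  have h_two_div : 1 < 2 / a - 1 := by rw [lt_sub_iff_add_lt, lt_div_iff₀ ha₀]; linarith
  have hD : 0 < Real.logb q ((q - 1) * (2 / a - 1)) :=
    Real.logb_pos (by linarith) (by nlinarith)
  have hε_le : ε ≤ Real.logb q ((q - 1) * (2 / a - 1)) * (b - a) := calc
    ε ≤ Real.logb q ((q - 1) * (1 / a - 1)) * (b - a) :=
      hε_eq ▸ qaryEntropy_sub_le (by omega) ha₀ hab (by linarith)
    _ ≤ Real.logb q ((q - 1) * (2 / a - 1)) * (b - a) := by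
      gcongr
      · linarith
      · exact mul_pos (by linarith) (by linarith)
      · linarith
      · norm_num
  rw [le_sub_iff_add_le', ← le_sub_iff_add_le, div_le_iff₀ hD]
  linarith

/-- For all integers `q ≥ 2`, all `y ∈ (0, 1 - 1/q)` and all `ε ∈ (0, y)`:
`H_q⁻¹(y - ε) ≤ H_q⁻¹(y) - ε / log_q[(q-1)·(2/H_q⁻¹(y-ε) - 1)]`. -/
theorem qaryEntropy_inv_bound (q : ℕ) (hq : 2 ≤ q) (Hinv : ℝ → ℝ)
    (hmaps : ∀ t ∈ Set.Ioo (0 : ℝ) 1, Hinv t ∈ Set.Ioo 0 (1 - 1 / (q : ℝ)))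
    (hleft : ∀ x ∈ Set.Ioo (0 : ℝ) (1 - 1 / (q : ℝ)), Hinv (qaryEntropy q x) = x)
    (hright : ∀ t ∈ Set.Ioo (0 : ℝ) 1, qaryEntropy q (Hinv t) = t)
    (y ε : ℝ) (hy : y ∈ Set.Ioo (0 : ℝ) (1 - 1 / (q : ℝ))) (hε : ε ∈ Set.Ioo (0 : ℝ) y) :
    Hinv (y - ε) ≤ Hinv y - ε / Real.logb q (((q : ℝ) - 1) * (2 / Hinv (y - ε) - 1)) :=
  qaryEntropy_inv_bound_general q hq Hinv hmaps hright y ε hy hε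
end

section
/- Let q be a prime. The number of ordered ℓ-tuples (g_1, …, g_ℓ) of vectors in F_q^{2n} that are linearly independent and pairwise symplectically orthogonal (⟨g_i, g_j⟩ = 0 for all i, j) equals ∏_{i=0}^{ℓ-1} (q^{2n-i} - q^i), for 1 ≤ ℓ ≤ n. -/
/-- The standard symplectic form on `F^n × F^n`:
`⟨(u,v),(u',v')⟩ = u·v' - v·u'`. -/
def sympForm {F : Type*} [CommRing F] {n : ℕ}
    (x y : (Fin n → F) × (Fin n → F)) : F :=
  ∑ i, (x.1 i * y.2 i - x.2 i * y.1 i)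

/-!
For a nondegenerate alternating form on `V` over a field with `q` elements, a linearly
independent isotropic `m`-tuple with span `W` extends by `v` to such an `(m+1)`-tuple exactly
when `v ∈ W^⊥ \ W`. Isotropy gives `W ≤ W^⊥` and nondegeneracy gives
`dim W^⊥ = dim V - m`, so there are `q^(dim V - m) - q^m` extensions of every `m`-tuple.
-/

open Module Submodule Set

namespace LinearMap.BilinForm

variable {K V : Type*} [Field K] [AddCommGroup V] [Module K V] (B : LinearMap.BilinForm K V)

def isotropicTuples (m : ℕ) : Set (Fin m → V) :=
  {g | LinearIndependent K g ∧ ∀ i j, B (g i) (g j) = 0}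

variable {B}

theorem mem_orthogonal_span_iff {s : Set V} {v : V} :
    v ∈ B.orthogonal (span K s) ↔ ∀ u ∈ s, B u v = 0 := by
  simp only [mem_orthogonal_iff]
  exact span_le (p := LinearMap.ker (B.flip v))

theorem cons_mem_isotropicTuples_iff (hB : B.IsAlt) {m : ℕ} {v : V} {g : Fin m → V} :
    Fin.cons v g ∈ B.isotropicTuples (m + 1) ↔
      g ∈ B.isotropicTuples m ∧
        v ∈ (↑(B.orthogonal (span K (Set.range g))) \ ↑(span K (Set.range g)) : Set V) := by
  simp only [isotropicTuples, mem_ofPred_eq, linearIndependent_finCons, Fin.forall_fin_succ,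
    Fin.cons_zero, Fin.cons_succ, hB v, SetLike.mem_coe, mem_orthogonal_span_iff,
    forall_mem_range, mem_sdiff, hB.eq_iff (x := v), forall_and, true_and]
  tauto

def isotropicTuplesSuccEquiv (hB : B.IsAlt) (m : ℕ) :
    B.isotropicTuples (m + 1) ≃ Σ g : B.isotropicTuples m,
      (↑(B.orthogonal (span K (Set.range g.1))) \ ↑(span K (Set.range g.1)) : Set V) where
  toFun g :=
    have h := (cons_mem_isotropicTuples_iff hB).mp (Fin.cons_self_tail g.1 ▸ g.2)
    ⟨⟨Fin.tail g.1, h.1⟩, ⟨g.1 0, h.2⟩⟩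
  invFun g := ⟨Fin.cons g.2.1 g.1.1, (cons_mem_isotropicTuples_iff hB).mpr ⟨g.1.2, g.2.2⟩⟩
  left_inv _ := by simp only [Fin.cons_self_tail, Subtype.coe_eta]
  right_inv _ := rfl

theorem natCard_orthogonal_diff_span [Finite K] [FiniteDimensional K V] (hB : B.Nondegenerate)
    {m : ℕ} {g : Fin m → V} (hg : g ∈ B.isotropicTuples m) :
    Nat.card (↑(B.orthogonal (span K (Set.range g))) \ ↑(span K (Set.range g)) : Set V) =
      Nat.card K ^ (finrank K V - m) - Nat.card K ^ m := by
  set W := span K (Set.range g)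
  have hle : W ≤ B.orthogonal W := by
    rw [span_le]
    rintro _ ⟨i, rfl⟩
    exact mem_orthogonal_span_iff.mpr <| forall_mem_range.mpr fun j ↦ hg.2 j i
  have hW : finrank K W = m := by
    rw [finrank_span_eq_card hg.1, Fintype.card_fin]
  have : Finite V := Module.finite_of_finite K
  rw [Nat.card_coe_set_eq, ncard_sdiff hle, ← Nat.card_coe_set_eq, ← Nat.card_coe_set_eq,
    SetLike.coe_sort_coe, SetLike.coe_sort_coe, natCard_eq_pow_finrank (K := K) (V := W),
    natCard_eq_pow_finrank (K := K) (V := B.orthogonal W), finrank_orthogonal hB, hW]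

theorem natCard_isotropicTuples [Finite K] [FiniteDimensional K V] (hB : B.IsAlt)
    (hB' : B.Nondegenerate) (m : ℕ) :
    Nat.card (B.isotropicTuples m) =
      ∏ i ∈ Finset.range m, (Nat.card K ^ (finrank K V - i) - Nat.card K ^ i) := by
  induction m with
  | zero =>
    rw [Finset.prod_range_zero, Nat.card_eq_one_iff_exists]
    exact ⟨⟨Fin.elim0, linearIndependent_empty_type, fun i ↦ i.elim0⟩,
      fun _ ↦ Subsingleton.elim _ _⟩
  | succ m ih =>
    have : Finite V := Module.finite_of_finite K
    have := Fintype.ofFinite (B.isotropicTuples m)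
    rw [Nat.card_congr (isotropicTuplesSuccEquiv hB m), Nat.card_sigma,
      Finset.sum_congr rfl fun g _ ↦ natCard_orthogonal_diff_span hB' g.2, Finset.sum_const,
      Finset.card_univ, ← Nat.card_eq_fintype_card, ih, smul_eq_mul, Finset.prod_range_succ]

end LinearMap.BilinForm

section Symplectic

variable {F : Type*} [CommRing F] {n : ℕ}

variable (F n) in
def sympBilinForm : LinearMap.BilinForm F ((Fin n → F) × (Fin n → F)) :=
  (dotProductBilin F F).compl₁₂ (.fst F _ _) (.snd F _ _) -
    (dotProductBilin F F).compl₁₂ (.snd F _ _) (.fst F _ _)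

theorem sympBilinForm_apply (x y : (Fin n → F) × (Fin n → F)) :
    sympBilinForm F n x y = sympForm x y := by
  simp [sympBilinForm, sympForm, dotProduct, Finset.sum_sub_distrib]

theorem sympBilinForm_isAlt : (sympBilinForm F n).IsAlt := fun x ↦ by
  simp [sympBilinForm, dotProduct_comm]

theorem sympBilinForm_nondegenerate : (sympBilinForm F n).Nondegenerate := by
  refine (LinearMap.IsRefl.nondegenerate_iff_separatingLeft (B := sympBilinForm F n)
    sympBilinForm_isAlt.isRefl).mpr fun x hx ↦ ?_
  ext i
  · simpa [sympBilinForm] using hx (0, Pi.single i 1)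
  · simpa [sympBilinForm] using hx (Pi.single i 1, 0)

end Symplectic

theorem count_isotropic_tuples_general (q n ℓ : ℕ) (hq : q.Prime) :
    Nat.card {g : Fin ℓ → (Fin n → ZMod q) × (Fin n → ZMod q) //
        LinearIndependent (ZMod q) g ∧ ∀ i j, sympForm (g i) (g j) = 0}
      = ∏ i ∈ Finset.range ℓ, (q ^ (2 * n - i) - q ^ i) := by
  have : Fact q.Prime := ⟨hq⟩
  have hdim : finrank (ZMod q) ((Fin n → ZMod q) × (Fin n → ZMod q)) = 2 * n := by
    rw [finrank_prod, finrank_fin_fun, two_mul]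
  simp only [← sympBilinForm_apply]
  have := (sympBilinForm (ZMod q) n).natCard_isotropicTuples sympBilinForm_isAlt
    sympBilinForm_nondegenerate ℓ
  rwa [Nat.card_zmod, hdim] at this

/-- For a prime `q` and `1 ≤ ℓ ≤ n`, the number of ordered `ℓ`-tuples of linearly
independent, pairwise symplectically orthogonal vectors in `F_q^{2n}` equals
`∏_{i=0}^{ℓ-1} (q^{2n-i} - q^i)`. -/
theorem count_isotropic_tuples (q n ℓ : ℕ) (hq : q.Prime) (h1 : 1 ≤ ℓ) (h2 : ℓ ≤ n) :
    Nat.card {g : Fin ℓ → (Fin n → ZMod q) × (Fin n → ZMod q) //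
        LinearIndependent (ZMod q) g ∧ ∀ i j, sympForm (g i) (g j) = 0}
      = ∏ i ∈ Finset.range ℓ, (q ^ (2 * n - i) - q ^ i) :=
  count_isotropic_tuples_general q n ℓ hq
end

section
/- Let q be a prime, 1 ≤ ℓ ≤ n, and σ a nonzero vector in F_q^{2n}. If an ℓ-dimensional totally isotropic subspace S of F_q^{2n} (a stabilizer) is chosen uniformly at random, then the probability that σ lies in the symplectic centralizer S^⊥ = {x : ⟨x, s⟩ = 0 ∀s ∈ S} is at most q^{-ℓ}. -/
open Module
open LinearMap (BilinForm)

theorem Nat.card_mul_eq_card_mul {α β : Type*} [Finite α] [Finite β] (r : α → β → Prop)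
    {m n : ℕ} (hm : ∀ a, Nat.card {b // r a b} = m) (hn : ∀ b, Nat.card {a // r a b} = n) :
    Nat.card α * m = Nat.card β * n := by
  have := Fintype.ofFinite α
  have := Fintype.ofFinite β
  have hα : Nat.card (Σ a, {b // r a b}) = Nat.card α * m := by
    simp [Nat.card_sigma, hm, Nat.card_eq_fintype_card]
  have hβ : Nat.card (Σ b, {a // r a b}) = Nat.card β * n := by
    simp [Nat.card_sigma, hn, Nat.card_eq_fintype_card]
  rw [← hα, ← hβ]
  exact Nat.card_congr <| (Equiv.subtypeProdEquivSigmaSubtype r).symm.trans <|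
    ((Equiv.prodComm α β).subtypeEquiv fun _ ↦ Iff.rfl).trans <|
      Equiv.subtypeProdEquivSigmaSubtype fun b a ↦ r a b

theorem Nat.mul_pow_le_of_mul_pow_sub_one_eq {a d q m ℓ : ℕ} (hm : 1 < q ^ m)
    (h : a * (q ^ m - 1) = d * (q ^ (m - ℓ) - 1)) : a * q ^ ℓ ≤ d := by
  rcases le_or_gt ℓ m with hℓ | hℓ
  · have hqℓ : 1 ≤ q ^ ℓ := Nat.one_le_pow _ _ <| Nat.pos_of_ne_zero <| by
      rintro rfl; exact hm.not_ge (zero_pow_le_one m)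
    refine Nat.le_of_mul_le_mul_right ?_ (Nat.sub_pos_of_lt hm)
    calc a * q ^ ℓ * (q ^ m - 1) = d * ((q ^ (m - ℓ) - 1) * q ^ ℓ) := by
          rw [mul_right_comm, h, mul_assoc]
      _ = d * (q ^ m - q ^ ℓ) := by rw [Nat.sub_one_mul, ← pow_add, Nat.sub_add_cancel hℓ]
      _ ≤ d * (q ^ m - 1) := by gcongr
  · rw [Nat.sub_eq_zero_of_le hℓ.le, pow_zero, Nat.sub_self, mul_zero, Nat.mul_eq_zero] at h
    rcases h with rfl | h
    · simp
    · omega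

theorem Module.Dual.exists_apply_ne_zero_and_apply_ne_zero {R V : Type*} [CommSemiring R]
    [AddCommMonoid V] [Module R V] {f g : Dual R V} (hf : f ≠ 0) (hg : g ≠ 0) :
    ∃ x, f x ≠ 0 ∧ g x ≠ 0 := by
  obtain ⟨a, ha⟩ := DFunLike.ne_iff.1 hf
  obtain ⟨b, hb⟩ := DFunLike.ne_iff.1 hg
  by_cases hga : g a = 0
  · by_cases hfb : f b = 0
    · exact ⟨a + b, by simpa [hfb] using ha, by simpa [hga] using hb⟩
    · exact ⟨b, hfb, hb⟩
  · exact ⟨a, ha, hga⟩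

section FiniteVectorSpace

variable {F V : Type*} [Field F] [AddCommGroup V] [Module F V] [Finite V]

theorem Module.natCard_ne_zero : Nat.card {v : V // v ≠ 0} = Nat.card F ^ finrank F V - 1 := by
  change Nat.card ↥({0}ᶜ : Set V) = _
  rw [Nat.card_coe_set_eq, Set.ncard_compl, Set.ncard_singleton,
    natCard_eq_pow_finrank (K := F)]

theorem Submodule.natCard_ne_zero_mem (W : Submodule F V) :
    Nat.card {v : {v : V // v ≠ 0} // v.1 ∈ W} = Nat.card F ^ finrank F W - 1 := by
  rw [← Module.natCard_ne_zero]
  exact Nat.card_congr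
    { toFun v := ⟨⟨v.1, v.2⟩, by simpa using v.1.2⟩
      invFun w := ⟨⟨w.1, by simpa using w.2⟩, w.1.2⟩
      left_inv _ := rfl
      right_inv _ := rfl }

end FiniteVectorSpace

namespace LinearMap.BilinForm

variable {F V : Type*} [Field F] [AddCommGroup V] [Module F V] {B : BilinForm F V}

theorem isOrthogonal_transvection (hB : B.IsAlt) {v : V} {c : F} (h : (c • B.flip v) v = 0) :
    B.IsOrthogonal (LinearEquiv.transvection h) := fun x y ↦ by
  simp only [LinearEquiv.transvection.apply, map_add, map_smul, LinearMap.add_apply,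
    LinearMap.smul_apply,
    hB.self_eq_zero, smul_eq_mul, flip_apply]
  rw [← hB.neg_eq v y]
  ring

theorem exists_isOrthogonal_apply_eq_of_apply_ne_zero (hB : B.IsAlt) {σ σ' : V}
    (h : B σ σ' ≠ 0) : ∃ g : V ≃ₗ[F] V, B.IsOrthogonal g ∧ g σ = σ' := by
  have hv : ((B σ σ')⁻¹ • B.flip (σ' - σ)) (σ' - σ) = 0 := by
    rw [LinearMap.smul_apply, flip_apply, hB.self_eq_zero, smul_zero]
  refine ⟨_, isOrthogonal_transvection hB hv, ?_⟩
  rw [LinearEquiv.transvection.apply]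
  simp [hB.self_eq_zero, h]

theorem exists_isOrthogonal_apply_eq (hB : B.IsAlt) (hN : B.Nondegenerate) {σ σ' : V}
    (hσ : σ ≠ 0) (hσ' : σ' ≠ 0) : ∃ g : V ≃ₗ[F] V, B.IsOrthogonal g ∧ g σ = σ' := by
  obtain ⟨ρ, hσρ, hρσ'⟩ : ∃ ρ, B σ ρ ≠ 0 ∧ B.flip σ' ρ ≠ 0 :=
    Dual.exists_apply_ne_zero_and_apply_ne_zero (mt (fun h ↦ hN.1 σ (LinearMap.congr_fun h)) hσ)
      (mt (fun h ↦ hN.2 σ' (LinearMap.congr_fun h)) hσ')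
  obtain ⟨g₁, hg₁, rfl⟩ := exists_isOrthogonal_apply_eq_of_apply_ne_zero hB hσρ
  obtain ⟨g₂, hg₂, rfl⟩ := exists_isOrthogonal_apply_eq_of_apply_ne_zero hB hρσ'
  exact ⟨g₁.trans g₂, fun x y ↦ by simp [hg₁ x y, hg₂ (g₁ x) (g₁ y)], rfl⟩

variable (B) in
def isotropicSubspaces (ℓ : ℕ) : Set (Submodule F V) :=
  {S | finrank F S = ℓ ∧ ∀ x ∈ S, ∀ y ∈ S, B x y = 0}

theorem map_mem_isotropicSubspaces_iff {g : V ≃ₗ[F] V} (hg : B.IsOrthogonal g) {ℓ : ℕ}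
    {S : Submodule F V} :
    S.map (g : V →ₗ[F] V) ∈ isotropicSubspaces B ℓ ↔ S ∈ isotropicSubspaces B ℓ := by
  simp [isotropicSubspaces, LinearEquiv.finrank_map_eq, -Submodule.mem_map_equiv, hg _ _]

theorem card_isotropicSubspaces_orth_eq (hB : B.IsAlt) (hN : B.Nondegenerate) (ℓ : ℕ)
    {σ σ' : V} (hσ : σ ≠ 0) (hσ' : σ' ≠ 0) :
    Nat.card {S : isotropicSubspaces B ℓ // ∀ s ∈ S.1, B σ s = 0} =
      Nat.card {S : isotropicSubspaces B ℓ // ∀ s ∈ S.1, B σ' s = 0} := by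
  obtain ⟨g, hg, rfl⟩ := exists_isOrthogonal_apply_eq hB hN hσ hσ'
  refine Nat.card_congr <| Equiv.subtypeEquiv
    ((Submodule.orderIsoMapComap g).toEquiv.subtypeEquiv fun _ ↦
      (map_mem_isotropicSubspaces_iff hg).symm) fun S ↦ ?_
  change _ ↔ ∀ s ∈ S.1.map (g : V →ₗ[F] V), B (g σ) s = 0
  simp [-Submodule.mem_map_equiv, hg _ _]

variable [Finite V]

theorem natCard_ne_zero_orth (hB : B.IsAlt) (hN : B.Nondegenerate) (S : Submodule F V) :
    Nat.card {v : {v : V // v ≠ 0} // ∀ s ∈ S, B v s = 0} =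
      Nat.card F ^ (finrank F V - finrank F S) - 1 := by
  rw [← finrank_orthogonal hN, ← Submodule.natCard_ne_zero_mem]
  exact Nat.card_congr <| Equiv.subtypeEquivRight fun v ↦ by
    simp [mem_orthogonal_iff, hB.eq_iff]

theorem card_isotropicSubspaces_orth_mul_eq (hB : B.IsAlt) (hN : B.Nondegenerate) (ℓ : ℕ)
    {σ : V} (hσ : σ ≠ 0) :
    Nat.card {S : isotropicSubspaces B ℓ // ∀ s ∈ S.1, B σ s = 0} *
        (Nat.card F ^ finrank F V - 1) =
      Nat.card (isotropicSubspaces B ℓ) * (Nat.card F ^ (finrank F V - ℓ) - 1) := by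
  have h := Nat.card_mul_eq_card_mul
    (fun (v : {v : V // v ≠ 0}) (S : isotropicSubspaces B ℓ) ↦ ∀ s ∈ S.1, B v s = 0)
    (fun v ↦ card_isotropicSubspaces_orth_eq hB hN ℓ v.2 hσ)
    (fun S ↦ by rw [natCard_ne_zero_orth hB hN, S.2.1])
  rw [Module.natCard_ne_zero (F := F)] at h
  rw [← h, mul_comm]

theorem card_isotropicSubspaces_orth_mul_pow_le (hB : B.IsAlt) (hN : B.Nondegenerate)
    (ℓ : ℕ) {σ : V} (hσ : σ ≠ 0) :
    Nat.card {S : Submodule F V // finrank F S = ℓ ∧ (∀ x ∈ S, ∀ y ∈ S, B x y = 0) ∧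
        ∀ s ∈ S, B σ s = 0} * Nat.card F ^ ℓ ≤ Nat.card (isotropicSubspaces B ℓ) := by
  have : Nontrivial V := ⟨σ, 0, hσ⟩
  rw [← Nat.card_congr ((Equiv.subtypeSubtypeEquivSubtypeInter _ _).trans
    (Equiv.subtypeEquivRight fun _ ↦ and_assoc))]
  refine Nat.mul_pow_le_of_mul_pow_sub_one_eq ?_ (card_isotropicSubspaces_orth_mul_eq hB hN ℓ hσ)
  rw [← natCard_eq_pow_finrank]
  exact Finite.one_lt_card

end LinearMap.BilinForm

section Symplectic

variable {F : Type*} [CommRing F] {n : ℕ}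

def sympBilin : BilinForm F ((Fin n → F) × (Fin n → F)) :=
  LinearMap.mk₂ F sympForm
    (fun _ _ _ ↦ by simp only [sympForm, ← Finset.sum_add_distrib]; congr! 1; simp; ring)
    (fun _ _ _ ↦ by simp only [sympForm, smul_eq_mul, Finset.mul_sum]; congr! 1; simp; ring)
    (fun _ _ _ ↦ by simp only [sympForm, ← Finset.sum_add_distrib]; congr! 1; simp; ring)
    (fun _ _ _ ↦ by simp only [sympForm, smul_eq_mul, Finset.mul_sum]; congr! 1; simp; ring)

theorem sympBilin_apply (x y : (Fin n → F) × (Fin n → F)) : sympBilin x y = sympForm x y := rfl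

theorem sympBilin_isAlt : (sympBilin (F := F) (n := n)).IsAlt := fun x ↦ by
  simp [sympBilin_apply, sympForm, mul_comm]

theorem sympBilin_nondegenerate : (sympBilin (F := F) (n := n)).Nondegenerate := by
  have hrefl : LinearMap.IsRefl (sympBilin (F := F) (n := n)) := sympBilin_isAlt.isRefl
  refine (LinearMap.IsRefl.nondegenerate_iff_separatingLeft hrefl).2 fun x hx ↦ ?_
  ext i
  · simpa [sympBilin_apply, sympForm, Pi.single_apply] using hx (0, Pi.single i 1)
  · simpa [sympBilin_apply, sympForm, Pi.single_apply] using hx (Pi.single i 1, 0)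

end Symplectic

theorem prob_in_normalizer_le_general (q n ℓ : ℕ) (hq : q.Prime)
    (σ : (Fin n → ZMod q) × (Fin n → ZMod q)) (hσ : σ ≠ 0) :
    (Nat.card {S : Submodule (ZMod q) ((Fin n → ZMod q) × (Fin n → ZMod q)) //
          Module.finrank (ZMod q) S = ℓ ∧ (∀ x ∈ S, ∀ y ∈ S, sympForm x y = 0) ∧
          ∀ s ∈ S, sympForm σ s = 0} : ℝ)
      / (Nat.card {S : Submodule (ZMod q) ((Fin n → ZMod q) × (Fin n → ZMod q)) //
          Module.finrank (ZMod q) S = ℓ ∧ ∀ x ∈ S, ∀ y ∈ S, sympForm x y = 0} : ℝ)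
      ≤ (q : ℝ) ^ (-(ℓ : ℤ)) := by
  have := Fact.mk hq
  have key := LinearMap.BilinForm.card_isotropicSubspaces_orth_mul_pow_le sympBilin_isAlt
    sympBilin_nondegenerate ℓ hσ
  rw [Nat.card_zmod] at key
  have hqℓ : (0 : ℝ) < (q : ℝ) ^ ℓ := pow_pos (by exact_mod_cast hq.pos) ℓ
  rw [zpow_neg, zpow_natCast]
  refine div_le_of_le_mul₀ (by positivity) (by positivity) ?_
  rw [le_inv_mul_iff₀ hqℓ, mul_comm]
  exact_mod_cast key

/-- For a prime `q`, `1 ≤ ℓ ≤ n`, and a nonzero `σ ∈ F_q^{2n}`: if an `ℓ`-dimensional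
totally isotropic subspace `S` (a stabilizer) is chosen uniformly at random, the
probability that `σ` lies in the symplectic centralizer `S^⊥` is at most `q^{-ℓ}`. -/
theorem prob_in_normalizer_le (q n ℓ : ℕ) (hq : q.Prime) (h1 : 1 ≤ ℓ) (h2 : ℓ ≤ n)
    (σ : (Fin n → ZMod q) × (Fin n → ZMod q)) (hσ : σ ≠ 0) :
    (Nat.card {S : Submodule (ZMod q) ((Fin n → ZMod q) × (Fin n → ZMod q)) //
          Module.finrank (ZMod q) S = ℓ ∧ (∀ x ∈ S, ∀ y ∈ S, sympForm x y = 0) ∧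
          ∀ s ∈ S, sympForm σ s = 0} : ℝ)
      / (Nat.card {S : Submodule (ZMod q) ((Fin n → ZMod q) × (Fin n → ZMod q)) //
          Module.finrank (ZMod q) S = ℓ ∧ ∀ x ∈ S, ∀ y ∈ S, sympForm x y = 0} : ℝ)
      ≤ (q : ℝ) ^ (-(ℓ : ℤ)) :=
  prob_in_normalizer_le_general q n ℓ hq σ hσ
end
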